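/- For any two distinct points ξ, η on the unit circle, the integral ∫₀^π d_I(⟨ξ,u_θ⟩, ⟨η,u_θ⟩) dθ diverges; i.e., every full Euclidean chord of the unit disk has infinite D-length. -/

import Mathlib

/-!
Write `ξ = ±u θ₀` with `θ₀ ∈ [0, π]`. Then `|⟨ξ, u_θ⟩| = |cos (θ - θ₀)|`, so
`1 - |⟨ξ, u_θ⟩| ≤ (θ - θ₀)² / 2` and `|f ⟨ξ, u_θ⟩| ≥ (θ - θ₀)⁻²` near `θ₀`. The other endpoint
does not cancel this blow-up: either `η = -ξ` and the integrand is `2 |f ⟨ξ, u_θ⟩|`, or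
`η ≠ ±u θ₀`, `|⟨η, u_θ⟩|` stays away from `1` near `θ₀`, and `f ⟨η, u_θ⟩` is bounded there.
A function bounded below by `(θ - θ₀)⁻² - M` near `θ₀` is not integrable on an interval
containing `θ₀`.
-/

open Real MeasureTheory Set

/-- f(t) = t/(1-|t|) -/
noncomputable def f (t : ℝ) : ℝ := t / (1 - |t|)

/-- d_I(s,t) = |f(s) - f(t)| -/
noncomputable def dI (s t : ℝ) : ℝ := |f s - f t|

/-- the unit direction u_θ = (cos θ, sin θ) -/
noncomputable def u (θ : ℝ) : EuclideanSpace ℝ (Fin 2) := !₂[Real.cos θ, Real.sin θ]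

/-- D(x,y) = ∫₀^π d_I(⟨x,u_θ⟩, ⟨y,u_θ⟩) dθ -/
noncomputable def Dmet (x y : EuclideanSpace ℝ (Fin 2)) : ℝ :=
  ∫ θ in (0:ℝ)..π, dI (inner ℝ x (u θ) : ℝ) (inner ℝ y (u θ) : ℝ)

open Filter Topology Asymptotics Interval

theorem f_neg (s : ℝ) : f (-s) = -f s := by simp [f, neg_div]

theorem abs_f_of_abs_lt_one {s : ℝ} (hs : |s| < 1) : |f s| = |s| / (1 - |s|) := by
  rw [f, abs_div, abs_of_pos (sub_pos.2 hs)]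

theorem abs_f_le_of_abs_le {r s : ℝ} (hr : r < 1) (hs : |s| ≤ r) : |f s| ≤ r / (1 - r) := by
  rw [abs_f_of_abs_lt_one (hs.trans_lt hr), div_le_div_iff₀ (by linarith) (by linarith)]
  nlinarith [abs_nonneg s]

theorem inv_sq_le_abs_f {x s : ℝ} (hx0 : x ≠ 0) (hx1 : |x| ≤ 1) (hs : |s| = |cos x|) :
    (x ^ 2)⁻¹ ≤ |f s| := by
  have hx2 : 0 < x ^ 2 := by positivity
  have hx2le : x ^ 2 ≤ 1 := by rw [← sq_abs]; nlinarith [abs_nonneg x]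
  have hcos_ge : 1 - x ^ 2 / 2 ≤ cos x := one_sub_sq_div_two_le_cos
  -- `x ≠ 0` matters: `cos x = 1` would give the junk value `f 1 = 0`
  have hcos_lt : cos x < 1 := by
    refine (cos_le_one x).lt_of_ne fun h => hx0 ?_
    have := abs_le.1 hx1
    exact (cos_eq_one_iff_of_lt_of_lt (by linarith [pi_gt_three]) (by linarith [pi_gt_three])).1 h
  rw [abs_of_pos (a := cos x) (by linarith)] at hs
  rw [abs_f_of_abs_lt_one (hs ▸ hcos_lt), hs, inv_le_iff_one_le_mul₀ hx2,
    div_mul_eq_mul_div, le_div_iff₀ (by linarith)]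
  nlinarith

theorem abs_f_le_dI_neg (s : ℝ) : |f s| ≤ dI s (-s) := by
  rw [dI, f_neg, sub_neg_eq_add, ← two_mul, abs_mul, abs_two]
  linarith [abs_nonneg (f s)]

theorem abs_f_sub_le_dI {r s t : ℝ} (hr : r < 1) (ht : |t| ≤ r) : |f s| - r / (1 - r) ≤ dI s t := by
  rw [dI]
  linarith [abs_f_le_of_abs_le hr ht, abs_sub_abs_le_abs_sub (f s) (f t)]

theorem not_intervalIntegrable_of_inv_sq_sub_le {g : ℝ → ℝ} {a b c M : ℝ} (hab : a ≠ b)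
    (hc : c ∈ [[a, b]]) (hg : ∀ᶠ x in 𝓝[≠] c, ((x - c) ^ 2)⁻¹ - M ≤ g x) :
    ¬ IntervalIntegrable g volume a b := by
  refine not_intervalIntegrable_of_sub_inv_isBigO_punctured (IsBigO.of_bound 1 ?_) hab hc
  have hnear : ∀ᶠ x in 𝓝[≠] c, |x - c| < (|M| + 1)⁻¹ :=
    (eventually_abs_sub_lt c (by positivity)).filter_mono nhdsWithin_le_nhds
  filter_upwards [hg, hnear, self_mem_nhdsWithin] with x hgx hx hxc
  have ht : 0 < |x - c| := abs_pos.2 (sub_ne_zero.2 hxc)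
  -- with `y = |x - c|⁻¹ ≥ M + 1`: `y ^ 2 - M ≥ y ^ 2 - y + 1 ≥ y`
  have hy : |M| + 1 < |x - c|⁻¹ := by rwa [lt_inv_comm₀ (by positivity) ht]
  rw [← sq_abs, ← inv_pow] at hgx
  rw [norm_inv, Real.norm_eq_abs, Real.norm_eq_abs, one_mul]
  nlinarith [le_abs_self M, le_abs_self (g x), sq_nonneg (|x - c|⁻¹ - 1)]

theorem abs_real_inner_lt_one {F : Type*} [NormedAddCommGroup F] [InnerProductSpace ℝ F] {x y : F}
    (hx : ‖x‖ = 1) (hy : ‖y‖ = 1) (hne : x ≠ y) (hne' : x ≠ -y) : |inner ℝ x y| < 1 :=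
  abs_lt.2 ⟨(neg_one_le_real_inner_of_norm_eq_one hx hy).lt_of_ne
      fun h => hne' ((inner_eq_neg_one_iff_of_norm_eq_one hx hy).1 h.symm),
    (real_inner_le_one_of_norm_eq_one hx hy).lt_of_ne
      (mt (inner_eq_one_iff_of_norm_eq_one hx hy).1 hne)⟩

theorem inner_u (x : EuclideanSpace ℝ (Fin 2)) (θ : ℝ) :
    inner ℝ x (u θ) = x 0 * cos θ + x 1 * sin θ := by
  simp [u, PiLp.inner_apply, Fin.sum_univ_two, mul_comm]

theorem inner_u_u (a b : ℝ) : inner ℝ (u a) (u b) = cos (a - b) := by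
  rw [inner_u]
  simp [u, cos_sub]

theorem continuous_u : Continuous u := by
  unfold u; fun_prop

theorem norm_u (θ : ℝ) : ‖u θ‖ = 1 := by
  simp [EuclideanSpace.norm_eq, u, Fin.sum_univ_two]

theorem sq_add_sq_eq_one_of_norm_eq_one {v : EuclideanSpace ℝ (Fin 2)} (hv : ‖v‖ = 1) : v 0 ^ 2 + v 1 ^ 2 = 1 := by
  simpa [hv, Fin.sum_univ_two] using (EuclideanSpace.real_norm_sq_eq v).symm

theorem u_arccos {v : EuclideanSpace ℝ (Fin 2)} (hv : ‖v‖ = 1) (hv1 : 0 ≤ v 1) :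
    u (arccos (v 0)) = v := by
  have h := sq_add_sq_eq_one_of_norm_eq_one hv
  have hv0 : |v 0| ≤ 1 := by rw [← sq_le_one_iff_abs_le_one]; nlinarith
  ext i
  fin_cases i
  · simp [u, cos_arccos (abs_le.1 hv0).1 (abs_le.1 hv0).2]
  · simp [u, sin_arccos, show 1 - v 0 ^ 2 = v 1 ^ 2 by linarith, sqrt_sq hv1]

theorem exists_mem_Icc_eq_u_or_eq_neg_u {ξ : EuclideanSpace ℝ (Fin 2)} (hξ : ‖ξ‖ = 1) :
    ∃ θ₀ ∈ Icc 0 π, ξ = u θ₀ ∨ ξ = -u θ₀ := by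
  by_cases h : 0 ≤ ξ 1
  · exact ⟨arccos (ξ 0), ⟨arccos_nonneg _, arccos_le_pi _⟩, .inl (u_arccos hξ h).symm⟩
  · refine ⟨arccos ((-ξ) 0), ⟨arccos_nonneg _, arccos_le_pi _⟩, .inr ?_⟩
    rw [u_arccos (by rwa [norm_neg]) (by simp; linarith), neg_neg]

theorem eventually_inv_sq_le_abs_f_inner {ξ : EuclideanSpace ℝ (Fin 2)} {θ₀ : ℝ}
    (hξ : ξ = u θ₀ ∨ ξ = -u θ₀) :
    ∀ᶠ θ in 𝓝[≠] θ₀, ((θ - θ₀) ^ 2)⁻¹ ≤ |f (inner ℝ ξ (u θ))| := by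
  have hnear : ∀ᶠ θ in 𝓝[≠] θ₀, |θ - θ₀| < 1 :=
    (eventually_abs_sub_lt θ₀ one_pos).filter_mono nhdsWithin_le_nhds
  filter_upwards [hnear, self_mem_nhdsWithin] with θ hθ hθ₀
  refine inv_sq_le_abs_f (sub_ne_zero.2 hθ₀) hθ.le ?_
  rcases hξ with rfl | rfl <;> simp [inner_u_u, ← cos_neg (θ₀ - θ)]

theorem exists_eventually_abs_f_sub_le_dI {ξ η : EuclideanSpace ℝ (Fin 2)} {θ₀ : ℝ}
    (hξ : ξ = u θ₀ ∨ ξ = -u θ₀) (hη : ‖η‖ = 1) (hne : ξ ≠ η) :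
    ∃ M, ∀ᶠ θ in 𝓝 θ₀, |f (inner ℝ ξ (u θ))| - M ≤ dI (inner ℝ ξ (u θ)) (inner ℝ η (u θ)) := by
  by_cases hneg : η = -ξ
  · refine ⟨0, .of_forall fun θ => ?_⟩
    rw [hneg, inner_neg_left, sub_zero]
    exact abs_f_le_dI_neg _
  have hlt : |inner ℝ η (u θ₀)| < 1 := by
    refine abs_real_inner_lt_one hη (norm_u θ₀) ?_ ?_ <;> rcases hξ with rfl | rfl <;>
      simp_all [eq_comm]
  obtain ⟨r, hr, hr1⟩ := exists_between hlt
  have hcont : Continuous fun θ => |inner ℝ η (u θ)| := (continuous_const.inner continuous_u).abs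
  refine ⟨r / (1 - r), ?_⟩
  filter_upwards [hcont.continuousAt.eventually_lt continuousAt_const hr] with θ hθ
  exact abs_f_sub_le_dI hr1 hθ.le

theorem chord_has_infinite_length (ξ η : EuclideanSpace ℝ (Fin 2))
    (hξ : ‖ξ‖ = 1) (hη : ‖η‖ = 1) (hne : ξ ≠ η) :
    ¬ IntervalIntegrable (fun θ => dI (inner ℝ ξ (u θ) : ℝ) (inner ℝ η (u θ) : ℝ)) volume 0 π := by
  obtain ⟨θ₀, hθ₀, hξθ₀⟩ := exists_mem_Icc_eq_u_or_eq_neg_u hξ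
  obtain ⟨M, hM⟩ := exists_eventually_abs_f_sub_le_dI hξθ₀ hη hne
  refine not_intervalIntegrable_of_inv_sq_sub_le (M := M) pi_pos.ne
    (by rwa [uIcc_of_le pi_pos.le]) ?_
  filter_upwards [eventually_inv_sq_le_abs_f_inner hξθ₀, nhdsWithin_le_nhds hM] with θ hlow hup
  linarith
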